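/- In any finite-horizon minimax control system, the minimum of the worst-case cost J over all strategies equals the minimum over structured strategies of the form g_t(z_{1:t}, u_{0:t−1}) = φ_t(P_t(z_{1:t}, u_{0:t−1})) for maps φ_t : 2^{𝒳_t} → 𝒰_t; moreover, for every strategy g there exists such a structured strategy g′ with J(g′) ≤ J(g). That is, without loss of optimality one can restrict attention to strategies that depend on the history only through the information state. -/
import Mathlib


/-- A finite-horizon minimax control system. -/
structure Sys where
  T : ℕ
  X : ℕ → Type
  U : ℕ → Type
  W : ℕ → Type
  Z : ℕ → Type
  f : ∀ t, X t → U t → W t → X (t+1)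
  h : ∀ t, X t → U t → Z (t+1)
  X0 : Set (X 0)
  d : X T → ℝ

namespace Sys

variable (S : Sys)

/-- A strategy assigns to each time `t` and history `(z_{1:t}, u_{0:t-1})` an action. -/
def Strat := ∀ t : ℕ, (∀ ℓ : Fin t, S.Z (ℓ.1+1)) → (∀ ℓ : Fin t, S.U ℓ.1) → S.U t

/-- Closed-loop trajectory: state, observation history and action history. -/
def traj (g : S.Strat) (x0 : S.X 0) (w : ∀ t, S.W t) :
    ∀ t : ℕ, S.X t × (∀ ℓ : Fin t, S.Z (ℓ.1+1)) × (∀ ℓ : Fin t, S.U ℓ.1)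
  | 0 => (x0, fun i => i.elim0, fun i => i.elim0)
  | t+1 =>
    let p := traj g x0 w t
    let u := g t p.2.1 p.2.2
    (S.f t p.1 u (w t),
     Fin.snoc (α := fun ℓ : Fin (t+1) => S.Z (ℓ.1+1)) p.2.1 (S.h t p.1 u),
     Fin.snoc (α := fun ℓ : Fin (t+1) => S.U ℓ.1) p.2.2 u)

/-- Worst-case cost of a strategy. -/
noncomputable def J (g : S.Strat) : ℝ :=
  sSup {r | ∃ x0 ∈ S.X0, ∃ w : ∀ t, S.W t, r = S.d (S.traj g x0 w S.T).1}

/-- Open-loop trajectory for a prefix of action values. -/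
def olp (x0 : S.X 0) (w : ∀ t, S.W t) : ∀ t : ℕ, (∀ ℓ : Fin t, S.U ℓ.1) → S.X t
  | 0, _ => x0
  | t+1, u => S.f t (olp x0 w t (fun ℓ => u ℓ.castSucc)) (u (Fin.last t)) (w t)

/-- The information state `P_t(z_{1:t}, u_{0:t-1})`. -/
def infoState (t : ℕ) (z : ∀ ℓ : Fin t, S.Z (ℓ.1+1)) (u : ∀ ℓ : Fin t, S.U ℓ.1) :
    Set (S.X t) :=
  {x | ∃ x0 ∈ S.X0, ∃ w : ∀ s, S.W s,
    (∀ ℓ : Fin t, S.h ℓ.1 (S.olp x0 w ℓ.1 (fun j => u ⟨j.1, j.2.trans ℓ.2⟩)) (u ℓ) = z ℓ) ∧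
    S.olp x0 w t u = x}

/-- The strategy-independent information-state update map `f̃_t`. -/
def Ftil (t : ℕ) (P : Set (S.X t)) (u : S.U t) (z : S.Z (t+1)) : Set (S.X (t+1)) :=
  {x' | ∃ x ∈ P, S.h t x u = z ∧ ∃ w : S.W t, x' = S.f t x u w}

/-- The feasible-observation set `Z̃_t(P, u)`. -/
def Zfeas (t : ℕ) (P : Set (S.X t)) (u : S.U t) : Set (S.Z (t+1)) :=
  {z | ∃ x ∈ P, S.h t x u = z}

/-- The dynamic-programming value functions. -/
noncomputable def V (t : ℕ) (P : Set (S.X t)) : ℝ :=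
  if h : t = S.T then sSup {r | ∃ x ∈ P, r = S.d (h ▸ x)}
  else if h2 : t < S.T then
    sInf {r | ∃ u : S.U t,
      r = sSup {s | ∃ z ∈ S.Zfeas t P u, s = V (t+1) (S.Ftil t P u z)}}
  else 0
termination_by S.T - t
decreasing_by omega

end Sys

section Aux

lemma snoc_lt {t : ℕ} {β : ℕ → Type} (u : ∀ ℓ : Fin t, β ℓ.1) (u' : β t)
    (j : Fin (t+1)) (hj : j.1 < t) :
    Fin.snoc (α := fun ℓ : Fin (t+1) => β ℓ.1) u u' j = u ⟨j.1, hj⟩ :=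
  Fin.snoc_castSucc (α := fun ℓ : Fin (t+1) => β ℓ.1) u' u ⟨j.1, hj⟩

namespace Sys

variable (S : Sys)

/-- A history `(z, u)` is consistent with strategy `g`. -/
def Cons (g : S.Strat) (t : ℕ) (z : ∀ ℓ : Fin t, S.Z (ℓ.1+1))
    (u : ∀ ℓ : Fin t, S.U ℓ.1) : Prop :=
  ∀ ℓ : Fin t, u ℓ = g ℓ.1 (fun j => z ⟨j.1, j.2.trans ℓ.2⟩) (fun j => u ⟨j.1, j.2.trans ℓ.2⟩)

lemma olp_succ (x0 : S.X 0) (w : ∀ s, S.W s) (t : ℕ) (u : ∀ ℓ : Fin (t+1), S.U ℓ.1) :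
    S.olp x0 w (t+1) u
      = S.f t (S.olp x0 w t (fun ℓ => u ℓ.castSucc)) (u (Fin.last t)) (w t) := rfl

lemma olp_congr (x0 : S.X 0) (w w' : ∀ s, S.W s) :
    ∀ (t : ℕ) (u : ∀ ℓ : Fin t, S.U ℓ.1), (∀ s, s < t → w s = w' s) →
      S.olp x0 w t u = S.olp x0 w' t u
  | 0, _, _ => rfl
  | t+1, u, hw => by
    rw [olp_succ, olp_succ,
      olp_congr x0 w w' t _ (fun s hs => hw s (Nat.lt_succ_of_lt hs)),
      hw t (Nat.lt_succ_self t)]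

lemma olp_snoc (x0 : S.X 0) (w : ∀ s, S.W s) (t : ℕ) (u : ∀ ℓ : Fin t, S.U ℓ.1)
    (u' : S.U t) :
    S.olp x0 w (t+1) (Fin.snoc (α := fun ℓ : Fin (t+1) => S.U ℓ.1) u u')
      = S.f t (S.olp x0 w t u) u' (w t) := by
  rw [olp_succ]
  congr 1
  · congr 1
    funext ℓ
    exact Fin.snoc_castSucc (α := fun ℓ : Fin (t+1) => S.U ℓ.1) u' u ℓ
  · exact Fin.snoc_last (α := fun ℓ : Fin (t+1) => S.U ℓ.1) u' u

lemma traj_succ (g : S.Strat) (x0 : S.X 0) (w : ∀ s, S.W s) (t : ℕ) :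
    S.traj g x0 w (t+1) =
      (S.f t (S.traj g x0 w t).1
         (g t (S.traj g x0 w t).2.1 (S.traj g x0 w t).2.2) (w t),
       Fin.snoc (α := fun ℓ : Fin (t+1) => S.Z (ℓ.1+1)) (S.traj g x0 w t).2.1
         (S.h t (S.traj g x0 w t).1
           (g t (S.traj g x0 w t).2.1 (S.traj g x0 w t).2.2)),
       Fin.snoc (α := fun ℓ : Fin (t+1) => S.U ℓ.1) (S.traj g x0 w t).2.2
         (g t (S.traj g x0 w t).2.1 (S.traj g x0 w t).2.2)) := rfl

/-- Prefix property of trajectories. -/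
lemma traj_prefix (g : S.Strat) (x0 : S.X 0) (w : ∀ s, S.W s) :
    ∀ (t s : ℕ) (hs : s ≤ t),
      (∀ j : Fin s, (S.traj g x0 w t).2.1 ⟨j.1, lt_of_lt_of_le j.2 hs⟩
          = (S.traj g x0 w s).2.1 j) ∧
      (∀ j : Fin s, (S.traj g x0 w t).2.2 ⟨j.1, lt_of_lt_of_le j.2 hs⟩
          = (S.traj g x0 w s).2.2 j) := by
  intro t
  induction t with
  | zero =>
    intro s hs
    obtain rfl : s = 0 := Nat.le_zero.mp hs
    exact ⟨fun j => j.elim0, fun j => j.elim0⟩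
  | succ t ih =>
    intro s hs
    rcases Nat.eq_or_lt_of_le hs with h | h
    · subst h
      exact ⟨fun j => rfl, fun j => rfl⟩
    · have hs' : s ≤ t := Nat.lt_succ_iff.mp h
      refine ⟨fun j => ?_, fun j => ?_⟩
      · exact (snoc_lt (β := fun n => S.Z (n+1)) (S.traj g x0 w t).2.1 _ _
          (lt_of_lt_of_le j.2 hs')).trans ((ih s hs').1 j)
      · exact (snoc_lt (β := fun n => S.U n) (S.traj g x0 w t).2.2 _ _
          (lt_of_lt_of_le j.2 hs')).trans ((ih s hs').2 j)

lemma traj_fst (g : S.Strat) (x0 : S.X 0) (w : ∀ s, S.W s) :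
    ∀ t : ℕ, (S.traj g x0 w t).1 = S.olp x0 w t (S.traj g x0 w t).2.2
  | 0 => rfl
  | t+1 => by
    rw [traj_succ, olp_snoc]
    exact congrArg (fun y => S.f t y _ (w t)) (traj_fst g x0 w t)

lemma traj_obs (g : S.Strat) (x0 : S.X 0) (w : ∀ s, S.W s) (t : ℕ) (ℓ : Fin t) :
    S.h ℓ.1 (S.olp x0 w ℓ.1 (fun j => (S.traj g x0 w t).2.2 ⟨j.1, j.2.trans ℓ.2⟩))
        ((S.traj g x0 w t).2.2 ℓ)
      = (S.traj g x0 w t).2.1 ℓ := by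
  have e2 : (fun j : Fin ℓ.1 => (S.traj g x0 w t).2.2 ⟨j.1, j.2.trans ℓ.2⟩)
      = (S.traj g x0 w ℓ.1).2.2 :=
    funext fun j => (S.traj_prefix g x0 w t ℓ.1 (le_of_lt ℓ.2)).2 j
  have hu : (S.traj g x0 w t).2.2 ℓ
      = g ℓ.1 (S.traj g x0 w ℓ.1).2.1 (S.traj g x0 w ℓ.1).2.2 :=
    ((S.traj_prefix g x0 w t (ℓ.1+1) ℓ.2).2 (Fin.last ℓ.1)).symm ▸
      (Fin.snoc_last (α := fun i : Fin (ℓ.1+1) => S.U i.1) _ _)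
  have hz : (S.traj g x0 w t).2.1 ℓ
      = S.h ℓ.1 (S.traj g x0 w ℓ.1).1
          (g ℓ.1 (S.traj g x0 w ℓ.1).2.1 (S.traj g x0 w ℓ.1).2.2) :=
    ((S.traj_prefix g x0 w t (ℓ.1+1) ℓ.2).1 (Fin.last ℓ.1)).symm ▸
      (Fin.snoc_last (α := fun i : Fin (ℓ.1+1) => S.Z (i.1+1)) _ _)
  rw [e2, hu, hz, ← S.traj_fst g x0 w ℓ.1]

lemma traj_cons (g : S.Strat) (x0 : S.X 0) (w : ∀ s, S.W s) (t : ℕ) :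
    S.Cons g t (S.traj g x0 w t).2.1 (S.traj g x0 w t).2.2 := by
  intro ℓ
  have hu : (S.traj g x0 w t).2.2 ℓ
      = g ℓ.1 (S.traj g x0 w ℓ.1).2.1 (S.traj g x0 w ℓ.1).2.2 :=
    ((S.traj_prefix g x0 w t (ℓ.1+1) ℓ.2).2 (Fin.last ℓ.1)).symm ▸
      (Fin.snoc_last (α := fun i : Fin (ℓ.1+1) => S.U i.1) _ _)
  have e1 : (fun j : Fin ℓ.1 => (S.traj g x0 w t).2.1 ⟨j.1, j.2.trans ℓ.2⟩)
      = (S.traj g x0 w ℓ.1).2.1 :=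
    funext fun j => (S.traj_prefix g x0 w t ℓ.1 (le_of_lt ℓ.2)).1 j
  have e2 : (fun j : Fin ℓ.1 => (S.traj g x0 w t).2.2 ⟨j.1, j.2.trans ℓ.2⟩)
      = (S.traj g x0 w ℓ.1).2.2 :=
    funext fun j => (S.traj_prefix g x0 w t ℓ.1 (le_of_lt ℓ.2)).2 j
  rw [e1, e2]
  exact hu

lemma traj_mem_info (g : S.Strat) (x0 : S.X 0) (hx0 : x0 ∈ S.X0)
    (w : ∀ s, S.W s) (t : ℕ) :
    (S.traj g x0 w t).1 ∈ S.infoState t (S.traj g x0 w t).2.1 (S.traj g x0 w t).2.2 :=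
  ⟨x0, hx0, w, fun ℓ => S.traj_obs g x0 w t ℓ, (S.traj_fst g x0 w t).symm⟩

lemma infoState_succ (t : ℕ) (z : ∀ ℓ : Fin (t+1), S.Z (ℓ.1+1))
    (u : ∀ ℓ : Fin (t+1), S.U ℓ.1) :
    S.infoState (t+1) z u
      = S.Ftil t (S.infoState t (fun j => z j.castSucc) (fun j => u j.castSucc))
          (u (Fin.last t)) (z (Fin.last t)) := by
  classical
  ext x'
  constructor
  · rintro ⟨x0, hx0, w, hobs, holp⟩
    refine ⟨S.olp x0 w t (fun j => u j.castSucc),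
      ⟨x0, hx0, w, fun ℓ => hobs ℓ.castSucc, rfl⟩, hobs (Fin.last t), w t, holp.symm⟩
  · rintro ⟨x, ⟨x0, hx0, w, hobs, holp⟩, hz, w', hx'⟩
    have hwagree : ∀ (m : ℕ), m ≤ t → ∀ F : ∀ j : Fin m, S.U j.1,
        S.olp x0 (Function.update w t w') m F = S.olp x0 w m F := fun m hm F =>
      S.olp_congr x0 _ w m F (fun s hs =>
        Function.update_of_ne (Nat.ne_of_lt (lt_of_lt_of_le hs hm)) w' w)
    refine ⟨x0, hx0, Function.update w t w', ?_, ?_⟩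
    · intro ℓ
      refine Fin.lastCases ?_ ?_ ℓ
      · show S.h t (S.olp x0 (Function.update w t w') t
            (fun j : Fin t => u ⟨j.1, j.2.trans (Fin.last t).2⟩)) (u (Fin.last t))
            = z (Fin.last t)
        have e : S.olp x0 (Function.update w t w') t
            (fun j : Fin t => u ⟨j.1, j.2.trans (Fin.last t).2⟩) = x :=
          (hwagree t le_rfl _).trans holp
        rw [e]
        exact hz
      · intro i
        show S.h i.1 (S.olp x0 (Function.update w t w') i.1
            (fun j : Fin i.1 => u ⟨j.1, j.2.trans (Fin.castSucc i).2⟩)) (u i.castSucc)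
            = z i.castSucc
        rw [hwagree i.1 (le_of_lt i.2) _]
        exact hobs i
    · rw [olp_succ, hwagree t le_rfl _, holp, Function.update_self]
      exact hx'.symm

lemma infoState_snoc (t : ℕ) (z : ∀ ℓ : Fin t, S.Z (ℓ.1+1)) (u : ∀ ℓ : Fin t, S.U ℓ.1)
    (z' : S.Z (t+1)) (u' : S.U t) :
    S.infoState (t+1) (Fin.snoc (α := fun ℓ : Fin (t+1) => S.Z (ℓ.1+1)) z z')
        (Fin.snoc (α := fun ℓ : Fin (t+1) => S.U ℓ.1) u u')
      = S.Ftil t (S.infoState t z u) u' z' := by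
  rw [S.infoState_succ]
  have hz : (fun j : Fin t =>
      Fin.snoc (α := fun ℓ : Fin (t+1) => S.Z (ℓ.1+1)) z z' j.castSucc) = z :=
    funext fun j => Fin.snoc_castSucc (α := fun ℓ : Fin (t+1) => S.Z (ℓ.1+1)) z' z j
  have hu : (fun j : Fin t =>
      Fin.snoc (α := fun ℓ : Fin (t+1) => S.U ℓ.1) u u' j.castSucc) = u :=
    funext fun j => Fin.snoc_castSucc (α := fun ℓ : Fin (t+1) => S.U ℓ.1) u' u j
  have hlz : Fin.snoc (α := fun ℓ : Fin (t+1) => S.Z (ℓ.1+1)) z z' (Fin.last t) = z' :=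
    Fin.snoc_last (α := fun ℓ : Fin (t+1) => S.Z (ℓ.1+1)) z' z
  have hlu : Fin.snoc (α := fun ℓ : Fin (t+1) => S.U ℓ.1) u u' (Fin.last t) = u' :=
    Fin.snoc_last (α := fun ℓ : Fin (t+1) => S.U ℓ.1) u' u
  rw [hz, hu, hlz, hlu]

lemma cons_realize (g : S.Strat) (t : ℕ) (z : ∀ ℓ : Fin t, S.Z (ℓ.1+1))
    (u : ∀ ℓ : Fin t, S.U ℓ.1) (hc : S.Cons g t z u) (x0 : S.X 0) (w : ∀ s, S.W s)
    (hobs : ∀ ℓ : Fin t,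
      S.h ℓ.1 (S.olp x0 w ℓ.1 (fun j => u ⟨j.1, j.2.trans ℓ.2⟩)) (u ℓ) = z ℓ) :
    ∀ (s : ℕ) (hs : s ≤ t),
      ((S.traj g x0 w s).2.1 = fun j : Fin s => z ⟨j.1, lt_of_lt_of_le j.2 hs⟩) ∧
      ((S.traj g x0 w s).2.2 = fun j : Fin s => u ⟨j.1, lt_of_lt_of_le j.2 hs⟩) ∧
      ((S.traj g x0 w s).1
        = S.olp x0 w s (fun j : Fin s => u ⟨j.1, lt_of_lt_of_le j.2 hs⟩)) := by
  intro s
  induction s with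
  | zero =>
    intro hs
    exact ⟨funext fun j => j.elim0, funext fun j => j.elim0, rfl⟩
  | succ s ih =>
    intro hs
    have hs' : s ≤ t := le_of_lt hs
    obtain ⟨ihz, ihu, ihx⟩ := ih hs'
    have hact : g s (S.traj g x0 w s).2.1 (S.traj g x0 w s).2.2 = u ⟨s, hs⟩ := by
      rw [ihz, ihu]
      exact (hc ⟨s, hs⟩).symm
    refine ⟨?_, ?_, ?_⟩
    · funext j
      rcases Nat.lt_succ_iff_lt_or_eq.mp j.2 with hj | hj
      · exact ((snoc_lt (β := fun n => S.Z (n+1)) (S.traj g x0 w s).2.1 _ j hj).trans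
          (congrFun ihz ⟨j.1, hj⟩))
      · have hj' : j = Fin.last s := Fin.ext hj
        subst hj'
        calc (S.traj g x0 w (s+1)).2.1 (Fin.last s)
            = S.h s (S.traj g x0 w s).1
                (g s (S.traj g x0 w s).2.1 (S.traj g x0 w s).2.2) :=
              Fin.snoc_last (α := fun i : Fin (s+1) => S.Z (i.1+1)) _ _
          _ = S.h s (S.olp x0 w s (fun j : Fin s => u ⟨j.1, lt_of_lt_of_le j.2 hs'⟩))
                (u ⟨s, hs⟩) := by rw [ihx, hact]
          _ = z ⟨s, hs⟩ := hobs ⟨s, hs⟩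
    · funext j
      rcases Nat.lt_succ_iff_lt_or_eq.mp j.2 with hj | hj
      · exact ((snoc_lt (β := fun n => S.U n) (S.traj g x0 w s).2.2 _ j hj).trans
          (congrFun ihu ⟨j.1, hj⟩))
      · have hj' : j = Fin.last s := Fin.ext hj
        subst hj'
        exact (Fin.snoc_last (α := fun i : Fin (s+1) => S.U i.1) _ _).trans hact
    · show S.f s (S.traj g x0 w s).1
          (g s (S.traj g x0 w s).2.1 (S.traj g x0 w s).2.2) (w s)
        = S.olp x0 w (s+1) (fun j : Fin (s+1) => u ⟨j.1, lt_of_lt_of_le j.2 hs⟩)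
      rw [olp_succ, ihx, hact]
      exact rfl

end Sys

end Aux



/-- A strategy is *structured* if it depends on the history only through the
information state. -/
def Sys.Structured (S : Sys) (g : S.Strat) : Prop :=
  ∃ φ : ∀ t, Set (S.X t) → S.U t,
    ∀ (t : ℕ) (z : ∀ ℓ : Fin t, S.Z (ℓ.1+1)) (u : ∀ ℓ : Fin t, S.U ℓ.1),
      g t z u = φ t (S.infoState t z u)


lemma Sys.key (S : Sys) [∀ t, Nonempty (S.U t)] (g : S.Strat) :
    ∃ g' : S.Strat, S.Structured g' ∧
      ∀ (x0 : S.X 0), x0 ∈ S.X0 → ∀ (w : ∀ s, S.W s) (t : ℕ),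
        ∃ x0' ∈ S.X0, ∃ w' : ∀ s, S.W s,
          (S.traj g' x0 w t).1 = (S.traj g x0' w' t).1 := by
  classical
  let Good : ∀ t, Set (S.X t) → Prop := fun t P =>
    ∃ p : (∀ ℓ : Fin t, S.Z (ℓ.1+1)) × (∀ ℓ : Fin t, S.U ℓ.1),
      S.Cons g t p.1 p.2 ∧ S.infoState t p.1 p.2 = P
  let φ : ∀ t, Set (S.X t) → S.U t := fun t P =>
    if h : Good t P then g t h.choose.1 h.choose.2 else Classical.arbitrary _
  let g' : S.Strat := fun t z u => φ t (S.infoState t z u)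
  refine ⟨g', ⟨φ, fun _ _ _ => rfl⟩, ?_⟩
  intro x0 hx0 w t
  have inv : ∀ t, Good t (S.infoState t (S.traj g' x0 w t).2.1 (S.traj g' x0 w t).2.2) := by
    intro t
    induction t with
    | zero =>
      exact ⟨((S.traj g' x0 w 0).2.1, (S.traj g' x0 w 0).2.2), fun ℓ => ℓ.elim0, rfl⟩
    | succ t ih =>
      set P := S.infoState t (S.traj g' x0 w t).2.1 (S.traj g' x0 w t).2.2 with hPdef
      have hchoose := ih.choose_spec
      set zc := ih.choose.1
      set uc := ih.choose.2
      obtain ⟨hcons, hPeq⟩ := hchoose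
      have hu' : g' t (S.traj g' x0 w t).2.1 (S.traj g' x0 w t).2.2 = g t zc uc := by
        show φ t P = g t zc uc
        exact dif_pos ih
      set u' : S.U t := g' t (S.traj g' x0 w t).2.1 (S.traj g' x0 w t).2.2 with hu'def
      set zo : S.Z (t+1) := S.h t (S.traj g' x0 w t).1 u' with hzodef
      refine ⟨(Fin.snoc (α := fun ℓ : Fin (t+1) => S.Z (ℓ.1+1)) zc zo,
               Fin.snoc (α := fun ℓ : Fin (t+1) => S.U ℓ.1) uc u'), ?_, ?_⟩
      · -- consistency of extended history
        intro ℓ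
        show Fin.snoc (α := fun i : Fin (t+1) => S.U i.1) uc u' ℓ
            = g ℓ.1
                (fun j => Fin.snoc (α := fun i : Fin (t+1) => S.Z (i.1+1)) zc zo
                  ⟨j.1, j.2.trans ℓ.2⟩)
                (fun j => Fin.snoc (α := fun i : Fin (t+1) => S.U i.1) uc u'
                  ⟨j.1, j.2.trans ℓ.2⟩)
        rcases Nat.lt_succ_iff_lt_or_eq.mp ℓ.2 with hℓ | hℓ
        · have e1 : (fun j : Fin ℓ.1 =>
              Fin.snoc (α := fun i : Fin (t+1) => S.Z (i.1+1)) zc zo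
                ⟨j.1, j.2.trans ℓ.2⟩)
              = fun j : Fin ℓ.1 => zc ⟨j.1, j.2.trans hℓ⟩ :=
            funext fun j => snoc_lt (β := fun n => S.Z (n+1)) zc zo _ (j.2.trans hℓ)
          have e2 : (fun j : Fin ℓ.1 =>
              Fin.snoc (α := fun i : Fin (t+1) => S.U i.1) uc u'
                ⟨j.1, j.2.trans ℓ.2⟩)
              = fun j : Fin ℓ.1 => uc ⟨j.1, j.2.trans hℓ⟩ :=
            funext fun j => snoc_lt uc u' _ (j.2.trans hℓ)
          rw [e1, e2, snoc_lt uc u' ℓ hℓ]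
          exact hcons ⟨ℓ.1, hℓ⟩
        · have hℓ' : ℓ = Fin.last t := Fin.ext hℓ
          subst hℓ'
          show Fin.snoc (α := fun i : Fin (t+1) => S.U i.1) uc u' (Fin.last t)
              = g t
                  (fun j : Fin t =>
                    Fin.snoc (α := fun i : Fin (t+1) => S.Z (i.1+1)) zc zo
                      ⟨j.1, j.2.trans (Fin.last t).2⟩)
                  (fun j : Fin t =>
                    Fin.snoc (α := fun i : Fin (t+1) => S.U i.1) uc u'
                      ⟨j.1, j.2.trans (Fin.last t).2⟩)
          have e1 : (fun j : Fin t =>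
              Fin.snoc (α := fun i : Fin (t+1) => S.Z (i.1+1)) zc zo
                ⟨j.1, j.2.trans (Fin.last t).2⟩) = zc :=
            funext fun j => snoc_lt (β := fun n => S.Z (n+1)) zc zo _ j.2
          have e2 : (fun j : Fin t =>
              Fin.snoc (α := fun i : Fin (t+1) => S.U i.1) uc u'
                ⟨j.1, j.2.trans (Fin.last t).2⟩) = uc :=
            funext fun j => snoc_lt uc u' _ j.2
          rw [e1, e2]
          exact (Fin.snoc_last (α := fun i : Fin (t+1) => S.U i.1) u' uc).trans hu'
      · -- info state equality
        rw [S.infoState_snoc, hPeq]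
        have hz' : (S.traj g' x0 w (t+1)).2.1
            = Fin.snoc (α := fun ℓ : Fin (t+1) => S.Z (ℓ.1+1)) (S.traj g' x0 w t).2.1 zo := rfl
        have hu2 : (S.traj g' x0 w (t+1)).2.2
            = Fin.snoc (α := fun ℓ : Fin (t+1) => S.U ℓ.1) (S.traj g' x0 w t).2.2 u' := rfl
        rw [hz', hu2, S.infoState_snoc]
  -- conclude
  have hmem := S.traj_mem_info g' x0 hx0 w t
  obtain ⟨⟨zc, uc⟩, hcons, hPeq⟩ := inv t
  rw [← hPeq] at hmem
  obtain ⟨x0', hx0', w', hobs, holp⟩ := hmem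
  obtain ⟨-, hu, hst⟩ := S.cons_realize g t zc uc hcons x0' w' hobs t le_rfl
  refine ⟨x0', hx0', w', ?_⟩
  rw [hst]
  rw [show (fun j : Fin t => uc ⟨j.1, lt_of_lt_of_le j.2 le_rfl⟩) = uc from funext fun j => rfl]
  exact holp.symm

/-- without loss of optimality one can restrict attention to
strategies that depend on the history only through the information state. -/
theorem stmt11 (S : Sys) (hT : 1 ≤ S.T)
    [∀ t, Finite (S.X t)] [∀ t, Nonempty (S.X t)]
    [∀ t, Finite (S.U t)] [∀ t, Nonempty (S.U t)]
    [∀ t, Finite (S.W t)] [∀ t, Nonempty (S.W t)]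
    [∀ t, Finite (S.Z t)] [∀ t, Nonempty (S.Z t)]
    (hX0 : S.X0.Nonempty) :
    (sInf {r | ∃ g : S.Strat, r = S.J g} =
      sInf {r | ∃ g : S.Strat, S.Structured g ∧ r = S.J g}) ∧
    ∀ g : S.Strat, ∃ g' : S.Strat, S.Structured g' ∧ S.J g' ≤ S.J g := by
  classical
  obtain ⟨x0d, hx0d⟩ := hX0
  have w0 : ∀ s, S.W s := fun s => Classical.arbitrary _
  have Dfin : (Set.range S.d).Finite := Set.finite_range _
  set Jset : S.Strat → Set ℝ :=
    fun g => {r | ∃ x0 ∈ S.X0, ∃ w : ∀ s, S.W s, r = S.d (S.traj g x0 w S.T).1} with hJset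
  have hJ : ∀ g, S.J g = sSup (Jset g) := fun g => rfl
  have hsub : ∀ g, Jset g ⊆ Set.range S.d := by
    rintro g r ⟨x0, hx0, w, rfl⟩; exact ⟨_, rfl⟩
  have hfin : ∀ g, (Jset g).Finite := fun g => Dfin.subset (hsub g)
  have hbdd : ∀ g, BddAbove (Jset g) := fun g => (hfin g).bddAbove
  have hne : ∀ g, (Jset g).Nonempty := fun g => ⟨_, x0d, hx0d, w0, rfl⟩
  have hle : ∀ g : S.Strat, ∃ g' : S.Strat, S.Structured g' ∧ S.J g' ≤ S.J g := by
    intro g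
    obtain ⟨g', hstr, hreach⟩ := S.key g
    refine ⟨g', hstr, ?_⟩
    rw [hJ, hJ]
    refine csSup_le (hne g') ?_
    rintro r ⟨x0, hx0, w, rfl⟩
    obtain ⟨x0', hx0', w', heq⟩ := hreach x0 hx0 w S.T
    rw [heq]
    exact le_csSup (hbdd g) ⟨x0', hx0', w', rfl⟩
  refine ⟨?_, hle⟩
  set A : Set ℝ := {r | ∃ g : S.Strat, r = S.J g} with hA
  set B : Set ℝ := {r | ∃ g : S.Strat, S.Structured g ∧ r = S.J g} with hB
  have hBA : B ⊆ A := by rintro r ⟨g, -, rfl⟩; exact ⟨g, rfl⟩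
  have hAD : A ⊆ Set.range S.d := by
    rintro r ⟨g, rfl⟩
    exact hsub g ((hne g).csSup_mem (hfin g))
  have hAbdd : BddBelow A := (Dfin.subset hAD).bddBelow
  have hBne : B.Nonempty := by
    obtain ⟨g', hstr, -⟩ := hle (fun t _ _ => Classical.arbitrary _)
    exact ⟨S.J g', g', hstr, rfl⟩
  have hAne : A.Nonempty := hBne.mono hBA
  refine le_antisymm (csInf_le_csInf hAbdd hBne hBA) (le_csInf hAne ?_)
  rintro r ⟨g, rfl⟩
  obtain ⟨g', hstr, hJle⟩ := hle g
  exact le_trans (csInf_le (hAbdd.mono hBA) ⟨g', hstr, rfl⟩) hJle
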